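/- arXiv:1507.05350 — 5 statements merged into one kernel-verified Lean document; each statement's English description precedes it below -/
import Mathlib

section
/- Let ξ : ℝ^m → ℝ ∪ {+∞} be a proper, lower semicontinuous, convex piecewise linear function, let ȳ ∈ ℝ^m, α > 0, and 1 ≤ s < m. Write points of ℝ^m as y = (y_s, y_{m−s}) ∈ ℝ^s × ℝ^{m−s}. Assume that for every y in the open ball of radius α centered at ȳ, every subgradient v ∈ ∂ξ(y) has its last m − s components equal to zero, i.e., ∂ξ(y) ⊂ ℝ^s × {0}. Then for every point y = (y_s, y_{m−s}) in this open ball such that (y_s, ȳ_{m−s}) also lies in the ball, one has ξ(y_s, y_{m−s}) = ξ(y_s, ȳ_{m−s}), where ȳ_{m−s} denotes the last m − s components of ȳ. -/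
noncomputable section
open Set Filter Topology Metric
open scoped RealInnerProductSpace Pointwise NNReal Classical

/-- `Euc m` is the Euclidean space `ℝ^m`. -/
abbrev Euc (m : ℕ) := EuclideanSpace ℝ (Fin m)

variable {F G : Type*} [NormedAddCommGroup F] [InnerProductSpace ℝ F]
  [NormedAddCommGroup G] [InnerProductSpace ℝ G]

/-- The (convex) subdifferential of an extended-real-valued function:
`∂θ(z) = {v : θ(z') ≥ θ(z) + ⟨v, z' - z⟩ for all z'}`. -/
def subdiff (θ : F → EReal) (z : F) : Set F :=
  {v | ∀ z', θ z + ((⟪v, z' - z⟫ : ℝ) : EReal) ≤ θ z'}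

/-- The Fréchet (regular) normal cone to `Ω` at `x`:
vectors `v` with `limsup_{y → x, y ∈ Ω} ⟨v, y - x⟩ / ‖y - x‖ ≤ 0`. -/
def frechetNormal (Ω : Set F) (x : F) : Set F :=
  {v | Filter.limsup (fun y => ⟪v, y - x⟫ / ‖y - x‖) (𝓝[Ω] x) ≤ 0}

/-- The limiting (Mordukhovich) normal cone to `Ω` at `x`. -/
def limitingNormal (Ω : Set F) (x : F) : Set F :=
  {v | ∃ xs vs : ℕ → F, (∀ k, xs k ∈ Ω) ∧ Filter.Tendsto xs Filter.atTop (𝓝 x) ∧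
    Filter.Tendsto vs Filter.atTop (𝓝 v) ∧ ∀ k, vs k ∈ frechetNormal Ω (xs k)}

/-- Pairing into the `ℓ²`-product of two inner product spaces. -/
def pl2 (x : F) (y : G) : WithLp 2 (F × G) := (WithLp.equiv 2 (F × G)).symm (x, y)

/-- The second-order subdifferential (generalized Hessian)
`∂²θ(z,v)(u) = {w : (w,-u) ∈ N((z,v); gph ∂θ)}`. -/
def sosd (θ : F → EReal) (z v : F) (u : F) : Set F :=
  {w | pl2 w (-u) ∈ limitingNormal
    {q : WithLp 2 (F × F) | ((WithLp.equiv 2 (F × F)) q).2 ∈ subdiff θ ((WithLp.equiv 2 (F × F)) q).1}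
    (pl2 z v)}

/-- The polyhedral domain `{z : ⟨d i, z⟩ ≤ β i for all i}` of a CPWL function. -/
def cpwlDom {m p : ℕ} (d : Fin p → Euc m) (β : Fin p → ℝ) : Set (Euc m) :=
  {z | ∀ i, ⟪d i, z⟫ ≤ β i}

/-- The CPWL function determined by the data `(a, α, d, β)`:
`θ(z) = max_i (⟨a i, z⟩ - α i)` on its polyhedral domain and `+∞` outside. -/
def cpwlFun {m l p : ℕ} (a : Fin l → Euc m) (α : Fin l → ℝ) (d : Fin p → Euc m)
    (β : Fin p → ℝ) : Euc m → EReal :=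
  fun z => if z ∈ cpwlDom d β then (((⨆ i, (⟪a i, z⟫ - α i)) : ℝ) : EReal) else ⊤

/-- Active indices of the max expression at `z`. -/
def Kact {m l p : ℕ} (a : Fin l → Euc m) (α : Fin l → ℝ) (d : Fin p → Euc m) (β : Fin p → ℝ)
    (z : Euc m) : Set (Fin l) :=
  {i | cpwlFun a α d β z = ((⟪a i, z⟫ - α i : ℝ) : EReal)}

/-- Active indices of the domain inequalities at `z`. -/
def Iact {m p : ℕ} (d : Fin p → Euc m) (β : Fin p → ℝ) (z : Euc m) : Set (Fin p) :=
  {i | ⟪d i, z⟫ = β i}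

/-- Convex conic hull: all finite nonnegative combinations of elements of `s`. -/
def coneHull (s : Set F) : Set F :=
  {x | ∃ (n : ℕ) (c : Fin n → ℝ) (y : Fin n → F), (∀ i, 0 ≤ c i) ∧ (∀ i, y i ∈ s) ∧
    x = ∑ i, c i • y i}

/-- `Spar θ z` is the linear subspace parallel to the affine hull of `∂θ(z)`. -/
def Spar (θ : F → EReal) (z : F) : Submodule ℝ F := (affineSpan ℝ (subdiff θ z)).direction

/-- A convex polyhedron: a finite intersection of closed halfspaces. -/
def IsPolyhedron {V : Type*} [AddCommGroup V] [Module ℝ V] (C : Set V) : Prop :=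
  ∃ (N : ℕ) (f : Fin N → V →ₗ[ℝ] ℝ) (b : Fin N → ℝ), C = {x | ∀ i, f i x ≤ b i}

/-- A proper convex piecewise linear function with values in `ℝ ∪ {+∞}`:
its epigraph is a convex polyhedron, it never takes the value `-∞`, and it is
not identically `+∞`. -/
def IsCPWL {V : Type*} [AddCommGroup V] [Module ℝ V] (f : V → EReal) : Prop :=
  IsPolyhedron {xt : V × ℝ | f xt.1 ≤ (xt.2 : EReal)} ∧ (∀ x, f x ≠ ⊥) ∧ (∃ x, f x ≠ ⊤)

/-- Local argmin set `M_γ(w,v)` of `x ↦ φ(x,w) - ⟨v,x⟩` over the ball `‖x - xb‖ ≤ γ`,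
with the convention that minimizers at which the objective is `+∞` are discarded. -/
def argminLoc {n d : ℕ} (φ : Euc n → Euc d → EReal) (xb : Euc n) (γ : ℝ) (w : Euc d)
    (v : Euc n) : Set (Euc n) :=
  {x | ‖x - xb‖ ≤ γ ∧ φ x w ≠ ⊤ ∧
    ∀ y, ‖y - xb‖ ≤ γ → φ x w - ((⟪v, x⟫ : ℝ) : EReal) ≤ φ y w - ((⟪v, y⟫ : ℝ) : EReal)}

/-- Local optimal value `m_γ(w,v)` of `x ↦ φ(x,w) - ⟨v,x⟩` over the ball `‖x - xb‖ ≤ γ`. -/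
def infLoc {n d : ℕ} (φ : Euc n → Euc d → EReal) (xb : Euc n) (γ : ℝ) (w : Euc d)
    (v : Euc n) : EReal :=
  ⨅ x ∈ {x : Euc n | ‖x - xb‖ ≤ γ}, (φ x w - ((⟪v, x⟫ : ℝ) : EReal))

/-- `xb` is a fully stable locally optimal solution of
`minimize φ(x,wb) - ⟨vb,x⟩` : for some `γ > 0` and neighborhoods `W × V` of `(wb,vb)`,
the local argmin map is single-valued and Lipschitz with value `xb` at `(wb,vb)`, and the
local optimal value function is finite and Lipschitz. -/
def FullyStableSol {n d : ℕ} (φ : Euc n → Euc d → EReal) (xb : Euc n) (wb : Euc d)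
    (vb : Euc n) : Prop :=
  ∃ γ > (0 : ℝ), ∃ W ∈ 𝓝 wb, ∃ V ∈ 𝓝 vb,
    (∃ σ : Euc d × Euc n → Euc n,
      (∃ K : ℝ≥0, LipschitzOnWith K σ (W ×ˢ V)) ∧
      (∀ w ∈ W, ∀ v ∈ V, argminLoc φ xb γ w v = {σ (w, v)}) ∧ σ (wb, vb) = xb) ∧
    (∃ μ : Euc d × Euc n → ℝ,
      (∃ K : ℝ≥0, LipschitzOnWith K μ (W ×ˢ V)) ∧
      ∀ w ∈ W, ∀ v ∈ V, infLoc φ xb γ w v = ((μ (w, v) : ℝ) : EReal))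

/-- The partial limiting subdifferential `∂ₓψ(x,w)` defined through the limiting normal
cone to the epigraph of `ψ(·,w)`. -/
def partialSubdiffX {n d : ℕ} (ψ : Euc n → Euc d → EReal) (x : Euc n) (w : Euc d) :
    Set (Euc n) :=
  {v | ∃ r : ℝ, ψ x w = (r : EReal) ∧
    pl2 v (-1 : ℝ) ∈ limitingNormal
      {q : WithLp 2 (Euc n × ℝ) |
        ψ ((WithLp.equiv 2 (Euc n × ℝ)) q).1 w ≤ ((((WithLp.equiv 2 (Euc n × ℝ)) q).2 : ℝ) : EReal)}
      (pl2 x r)}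

/-- The coderivative `D*∂ₓψ(xb,wb,qb)(u)` of the partial subdifferential mapping,
via the limiting normal cone to its graph in `ℝ^n × ℝ^d × ℝ^n`. -/
def coderivPartialSubdiffX {n d : ℕ} (ψ : Euc n → Euc d → EReal) (xb : Euc n) (wb : Euc d)
    (qb : Euc n) (u : Euc n) : Set (Euc n × Euc d) :=
  {P | pl2 (pl2 P.1 P.2) (-u) ∈ limitingNormal
    {t : WithLp 2 (WithLp 2 (Euc n × Euc d) × Euc n) |
      ((WithLp.equiv 2 (WithLp 2 (Euc n × Euc d) × Euc n)) t).2 ∈ partialSubdiffX ψ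
        ((WithLp.equiv 2 (Euc n × Euc d)) (((WithLp.equiv 2 (WithLp 2 (Euc n × Euc d) × Euc n)) t).1)).1
        ((WithLp.equiv 2 (Euc n × Euc d)) (((WithLp.equiv 2 (WithLp 2 (Euc n × Euc d) × Euc n)) t).1)).2}
    (pl2 (pl2 xb wb) qb)}

/-- Partial Hessian in `x` : the derivative in `x` of the partial gradient in `x`. -/
def hessXX {n d : ℕ} (g : Euc n → Euc d → ℝ) (xb : Euc n) (wb : Euc d) : Euc n →L[ℝ] Euc n :=
  fderiv ℝ (fun x => gradient (fun x' => g x' wb) x) xb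

/-- Mixed partial Hessian: derivative in `w` of the partial gradient in `x`. -/
def hessWX {n d : ℕ} (g : Euc n → Euc d → ℝ) (xb : Euc n) (wb : Euc d) : Euc d →L[ℝ] Euc n :=
  fderiv ℝ (fun w => gradient (fun x' => g x' w) xb) wb

/-!
Put `d = y' - y`, where `y'` replaces the last components of `y` by those of `yb`; every
subgradient on the ball is orthogonal to `d`. As `ξ` is polyhedral, its domain `D` is a closed
convex polyhedron and `∂ξ` is nonempty on `D`. A subgradient plus a normal vector of `D` is again
a subgradient, so the normal vectors of `D` at points of the ball are orthogonal to `d` as well.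
Hence `D` cannot end on the segment `[y, y']`: projecting a point just beyond the end back onto
`D` would give a normal vector with a nonzero component along `d`. So `y` and `y'` both lie in `D`
or both lie outside, and in the first case subgradients at `y` and at `y'` give `ξ y ≤ ξ y'` and
`ξ y' ≤ ξ y`.
-/

section NormalCone

variable {E : Type*} [NormedAddCommGroup E] [InnerProductSpace ℝ E]

def normalCone (D : Set E) (x : E) : Set E := {n | ∀ z ∈ D, ⟪n, z - x⟫ ≤ 0}

variable [CompleteSpace E] {D : Set E}

theorem exists_sub_mem_normalCone (hD : IsClosed D) (hDc : Convex ℝ D) {x : E} (hx : x ∈ D)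
    (q : E) : ∃ π ∈ D, q - π ∈ normalCone D π ∧ ‖q - π‖ ≤ ‖q - x‖ := by
  obtain ⟨π, hπ, hmin⟩ := exists_norm_eq_iInf_of_complete_convex ⟨x, hx⟩ hD.isComplete hDc q
  refine ⟨π, hπ, (norm_eq_iInf_iff_real_inner_le_zero hDc hπ).1 hmin, ?_⟩
  rw [hmin]
  exact ciInf_le ⟨0, Set.forall_mem_range.2 fun _ => norm_nonneg _⟩ (⟨x, hx⟩ : D)

/-- The projection `π` of `x + e` onto `D` lies within `2‖e‖` of `x`, and `x + e - π` is normal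
to `D` at `π`; orthogonality to `e` then forces `x + e = π`. -/
theorem add_mem_of_forall_inner_normalCone_eq_zero_of_dist_le (hD : IsClosed D)
    (hDc : Convex ℝ D) {x e : E} (hx : x ∈ D)
    (he : ∀ π ∈ D, dist π x ≤ 2 * ‖e‖ → ∀ n ∈ normalCone D π, ⟪n, e⟫ = 0) : x + e ∈ D := by
  obtain ⟨π, hπ, hnormal, hclose⟩ := exists_sub_mem_normalCone hD hDc hx (x + e)
  rw [add_sub_cancel_left] at hclose
  have hdist : dist π x ≤ 2 * ‖e‖ := by
    calc dist π x ≤ dist π (x + e) + dist (x + e) x := dist_triangle _ _ _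
      _ ≤ ‖e‖ + ‖e‖ := by
        gcongr
        · rwa [dist_comm, dist_eq_norm]
        · simp
      _ = 2 * ‖e‖ := by ring
  have horth := he π hπ hdist _ hnormal
  have hsq : ‖x + e - π‖ ^ 2 ≤ 0 := by
    calc ‖x + e - π‖ ^ 2 = ⟪x + e - π, e⟫ + ⟪x + e - π, x - π⟫ := by
          rw [← inner_add_right, ← real_inner_self_eq_norm_sq]; congr 1; abel
      _ ≤ 0 := by linarith [hnormal x hx]
  have : x + e = π := sub_eq_zero.1 (norm_eq_zero.1 (by nlinarith [norm_nonneg (x + e - π)]))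
  exact this ▸ hπ

theorem add_mem_of_forall_inner_normalCone_eq_zero (hD : IsClosed D) (hDc : Convex ℝ D)
    {U : Set E} (hU : IsOpen U) (hUc : Convex ℝ U) {d : E}
    (hd : ∀ π ∈ D ∩ U, ∀ n ∈ normalCone D π, ⟪n, d⟫ = 0) {x : E} (hx : x ∈ D ∩ U)
    (hxd : x + d ∈ U) : x + d ∈ D := by
  set O : Set ℝ := {τ | x + τ • d ∈ D ∩ U}
  have hO : IsOpen O := by
    refine isOpen_iff_mem_nhds.2 fun τ hτ => ?_
    obtain ⟨r, hr, hball⟩ := Metric.isOpen_iff.1 hU _ hτ.2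
    have hsmall : ∀ᶠ σ in 𝓝 τ, ‖(σ - τ) • d‖ < r / 2 := by
      have : Continuous fun σ : ℝ => ‖(σ - τ) • d‖ := by fun_prop
      exact this.continuousAt.eventually_lt continuousAt_const (by simpa using half_pos hr)
    filter_upwards [hsmall] with σ hσ
    have hstep : x + σ • d = (x + τ • d) + (σ - τ) • d := by module
    have hmemU : ∀ z, dist z (x + τ • d) ≤ 2 * ‖(σ - τ) • d‖ → z ∈ U := fun z hz =>
      hball (Metric.mem_ball.2 (by linarith))
    refine ⟨?_, hstep ▸ hmemU _ (by rw [dist_self_add_left]; linarith [norm_nonneg ((σ - τ) • d)])⟩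
    rw [hstep]
    refine add_mem_of_forall_inner_normalCone_eq_zero_of_dist_le hD hDc hτ.1
      fun π hπ hdist n hn => ?_
    rw [inner_smul_right, hd π ⟨hπ, hmemU π hdist⟩ n hn, mul_zero]
  have hseg : ∀ τ ∈ Icc (0 : ℝ) 1, x + τ • d ∈ U := fun τ hτ => by
    have := hUc.add_smul_mem hx.2 (by simpa using hxd) hτ
    simpa using this
  have hIcc : Icc (0 : ℝ) 1 ⊆ O := by
    refine isPreconnected_Icc.subset_of_closure_inter_subset hO ⟨0, by simpa [O] using hx⟩ ?_
    rintro τ ⟨hτ, hτI⟩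
    have hcont : Continuous fun σ : ℝ => x + σ • d := by fun_prop
    have hclosed : IsClosed {σ : ℝ | x + σ • d ∈ D} := hD.preimage hcont
    exact ⟨closure_minimal (fun σ hσ => hσ.1) hclosed hτ, hseg τ hτI⟩
  simpa [O] using (hIcc ⟨zero_le_one, le_rfl⟩).1

end NormalCone

section Subdifferential

variable {E : Type*} [NormedAddCommGroup E] [InnerProductSpace ℝ E] {f : E → EReal} {x v : E}

theorem le_of_mem_subdiff_of_inner_eq_zero (hv : v ∈ subdiff f x) {z : E}
    (hz : ⟪v, z - x⟫ = 0) : f x ≤ f z := by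
  simpa [hz] using hv z

theorem add_mem_subdiff_of_mem_normalCone (hv : v ∈ subdiff f x) {n : E}
    (hn : n ∈ normalCone {z | f z ≠ ⊤} x) : v + n ∈ subdiff f x := by
  intro z
  by_cases hz : f z = ⊤
  · simp [hz]
  calc f x + ((⟪v + n, z - x⟫ : ℝ) : EReal) ≤ f x + ((⟪v, z - x⟫ : ℝ) : EReal) := by
        gcongr
        rw [inner_add_left]
        linarith [hn z hz]
    _ ≤ f z := hv z

end Subdifferential

section PolyhedralEpigraph

variable {V ι : Type*} [AddCommGroup V] [Module ℝ V]

theorem LinearMap.apply_prod_real (φ : V × ℝ →ₗ[ℝ] ℝ) (z : V) (r : ℝ) :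
    φ (z, r) = φ (z, 0) + r * φ (0, 1) := by
  rw [← smul_eq_mul, ← map_smul, ← map_add]
  simp

def IsPolyhedralEpigraph (f : V → EReal) (g : ι → V →ₗ[ℝ] ℝ) (c b : ι → ℝ) : Prop :=
  ∀ z (r : ℝ), f z ≤ r ↔ ∀ i, g i z + r * c i ≤ b i

namespace IsPolyhedralEpigraph

variable {f : V → EReal} {g : ι → V →ₗ[ℝ] ℝ} {c b : ι → ℝ}

theorem coeff_nonpos (h : IsPolyhedralEpigraph f g c b) {x : V} {r : ℝ} (hx : f x ≤ r) (i : ι) :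
    c i ≤ 0 := by
  by_contra! hci
  have hbelow : ∀ᶠ r' in atTop, g i x + r' * c i ≤ b i := by
    filter_upwards [eventually_ge_atTop r] with r' hr'
    exact (h x r').1 (hx.trans (EReal.coe_le_coe_iff.2 hr')) i
  have habove : ∀ᶠ r' in atTop, b i < g i x + r' * c i :=
    (tendsto_atTop_add_const_left _ _ (tendsto_id.atTop_mul_const hci)).eventually_gt_atTop _
  obtain ⟨r', hle, hlt⟩ := (hbelow.and habove).exists
  linarith

theorem dom_eq [Finite ι] (h : IsPolyhedralEpigraph f g c b) (hc : ∀ i, c i ≤ 0) :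
    {z | f z ≠ ⊤} = ⋂ i ∈ {i | c i = 0}, {z | g i z ≤ b i} := by
  ext z
  simp only [Set.mem_ofPred_eq, Set.mem_iInter]
  constructor
  · intro hz i hci
    obtain ⟨r, hr, -⟩ := EReal.lt_iff_exists_real_btwn.1 (lt_top_iff_ne_top.2 hz)
    simpa [hci] using (h z r).1 hr.le i
  · intro hz
    have : ∀ᶠ r in atTop, ∀ i, g i z + r * c i ≤ b i := by
      refine eventually_all.2 fun i => ?_
      rcases (hc i).lt_or_eq with hci | hci
      · exact ((tendsto_atBot_add_const_left _ _
          (tendsto_id.atTop_mul_const_of_neg hci)).eventually_le_atBot _)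
      · simp [hci, hz i hci]
    obtain ⟨r, hr⟩ := this.exists
    exact ne_top_of_le_ne_top (EReal.coe_ne_top r) ((h z r).2 hr)

/-- If no constraint with `c i < 0` were active at `(x, r)`, that point could be pushed down
inside the epigraph. -/
theorem exists_active [Finite ι] (h : IsPolyhedralEpigraph f g c b) {x : V} {r : ℝ}
    (hx : f x = r) : ∃ i, c i < 0 ∧ g i x + r * c i = b i := by
  by_contra! hslack
  have hle := (h x r).1 hx.le
  have hdown : ∀ᶠ ε in 𝓝[>] (0 : ℝ), ∀ i, g i x + (r - ε) * c i ≤ b i := by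
    refine eventually_all.2 fun i => ?_
    rcases lt_or_ge (c i) 0 with hci | hci
    · have hlt : g i x + (r - 0) * c i < b i := by
        simpa using lt_of_le_of_ne (hle i) (hslack i hci)
      have hcont : Continuous fun ε : ℝ => g i x + (r - ε) * c i := by fun_prop
      exact nhdsWithin_le_nhds
        ((hcont.continuousAt.eventually_lt continuousAt_const hlt).mono fun _ => le_of_lt)
    · filter_upwards [self_mem_nhdsWithin] with ε (hε : 0 < ε)
      nlinarith [hle i]
  obtain ⟨ε, hε, hεpos⟩ := (hdown.and self_mem_nhdsWithin).exists
  have := (h x (r - ε)).2 hε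
  rw [hx, EReal.coe_le_coe_iff] at this
  linarith [show (0 : ℝ) < ε from hεpos]

variable {E : Type*} [NormedAddCommGroup E] [InnerProductSpace ℝ E] [FiniteDimensional ℝ E]
  {f : E → EReal} {g : ι → E →ₗ[ℝ] ℝ}

theorem subdiff_nonempty [Finite ι] (h : IsPolyhedralEpigraph f g c b) {x : E} {r : ℝ}
    (hx : f x = r) : (subdiff f x).Nonempty := by
  obtain ⟨i, hci, hact⟩ := h.exists_active hx
  set a := (InnerProductSpace.toDual ℝ E).symm (g i).toContinuousLinearMap
  have ha : ∀ z, ⟪a, z⟫ = g i z := fun z => by simp [a]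
  refine ⟨(-c i)⁻¹ • a, fun z => EReal.le_of_forall_lt_iff_le.1 fun rz hz => ?_⟩
  have hz' := (h z rz).1 hz.le i
  have hslope : (-c i)⁻¹ * (g i z - g i x) ≤ rz - r := by
    rw [inv_mul_le_iff₀ (neg_pos.2 hci)]
    nlinarith
  rw [hx, ← EReal.coe_add, EReal.coe_le_coe_iff, real_inner_smul_left, inner_sub_right, ha, ha]
  linarith

end IsPolyhedralEpigraph

end PolyhedralEpigraph

namespace IsCPWL

theorem exists_isPolyhedralEpigraph {V : Type*} [AddCommGroup V] [Module ℝ V] {f : V → EReal}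
    (hf : IsCPWL f) : ∃ (N : ℕ) (g : Fin N → V →ₗ[ℝ] ℝ) (c b : Fin N → ℝ),
      IsPolyhedralEpigraph f g c b ∧ ∀ i, c i ≤ 0 := by
  obtain ⟨⟨N, φ, b, hepi⟩, -, x₀, hx₀⟩ := hf
  have h : IsPolyhedralEpigraph f (fun i => (φ i).comp (LinearMap.inl ℝ V ℝ))
      (fun i => φ i (0, 1)) b := fun z r => by
    simpa only [Set.mem_ofPred_eq, LinearMap.comp_apply, LinearMap.inl_apply,
      LinearMap.apply_prod_real _ z r] using Set.ext_iff.1 hepi (z, r)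
  obtain ⟨r₀, hr₀, -⟩ := EReal.lt_iff_exists_real_btwn.1 (lt_top_iff_ne_top.2 hx₀)
  exact ⟨N, _, _, b, h, h.coeff_nonpos hr₀.le⟩

theorem convex_dom {V : Type*} [AddCommGroup V] [Module ℝ V] {f : V → EReal} (hf : IsCPWL f) :
    Convex ℝ {x | f x ≠ ⊤} := by
  obtain ⟨N, g, c, b, h, hc⟩ := hf.exists_isPolyhedralEpigraph
  rw [h.dom_eq hc]
  exact convex_iInter₂ fun i _ => convex_halfSpace_le (g i).isLinear (b i)

variable {E : Type*} [NormedAddCommGroup E] [InnerProductSpace ℝ E] [FiniteDimensional ℝ E]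
  {f : E → EReal}

theorem isClosed_dom (hf : IsCPWL f) : IsClosed {x | f x ≠ ⊤} := by
  obtain ⟨N, g, c, b, h, hc⟩ := hf.exists_isPolyhedralEpigraph
  rw [h.dom_eq hc]
  exact isClosed_biInter fun i _ => isClosed_le (g i).continuous_of_finiteDimensional
    continuous_const

theorem subdiff_nonempty (hf : IsCPWL f) {x : E} (hx : f x ≠ ⊤) : (subdiff f x).Nonempty := by
  obtain ⟨N, g, c, b, h, -⟩ := hf.exists_isPolyhedralEpigraph
  exact h.subdiff_nonempty (EReal.coe_toReal hx (hf.2.1 x)).symm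

theorem inner_eq_zero_of_mem_normalCone (hf : IsCPWL f) {U : Set E} {d : E}
    (hd : ∀ y ∈ U, ∀ v ∈ subdiff f y, ⟪v, d⟫ = 0) :
    ∀ π ∈ {x | f x ≠ ⊤} ∩ U, ∀ n ∈ normalCone {x | f x ≠ ⊤} π, ⟪n, d⟫ = 0 := by
  rintro π ⟨hπ, hπU⟩ n hn
  obtain ⟨v, hv⟩ := hf.subdiff_nonempty hπ
  have := hd π hπU _ (add_mem_subdiff_of_mem_normalCone hv hn)
  rwa [inner_add_left, hd π hπU v hv, zero_add] at this

variable {U : Set E} {x d : E}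

theorem le_apply_add (hf : IsCPWL f) (hU : IsOpen U) (hUc : Convex ℝ U)
    (hd : ∀ y ∈ U, ∀ v ∈ subdiff f y, ⟪v, d⟫ = 0) (hx : x ∈ U) (hxd : x + d ∈ U) :
    f x ≤ f (x + d) := by
  by_cases htop : f (x + d) = ⊤
  · simp [htop]
  have hnormal := hf.inner_eq_zero_of_mem_normalCone (d := -d) fun y hy v hv => by
    rw [inner_neg_right, hd y hy v hv, neg_zero]
  have hxdom : f x ≠ ⊤ := by
    simpa using add_mem_of_forall_inner_normalCone_eq_zero hf.isClosed_dom hf.convex_dom hU hUc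
      hnormal ⟨htop, hxd⟩ (by simpa using hx)
  obtain ⟨v, hv⟩ := hf.subdiff_nonempty hxdom
  exact le_of_mem_subdiff_of_inner_eq_zero hv (by rw [add_sub_cancel_left]; exact hd x hx v hv)

theorem apply_add_eq (hf : IsCPWL f) (hU : IsOpen U) (hUc : Convex ℝ U)
    (hd : ∀ y ∈ U, ∀ v ∈ subdiff f y, ⟪v, d⟫ = 0) (hx : x ∈ U) (hxd : x + d ∈ U) :
    f (x + d) = f x := by
  have hd' : ∀ y ∈ U, ∀ v ∈ subdiff f y, ⟪v, -d⟫ = 0 := fun y hy v hv => by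
    rw [inner_neg_right, hd y hy v hv, neg_zero]
  refine le_antisymm ?_ (hf.le_apply_add hU hUc hd hx hxd)
  simpa using hf.le_apply_add hU hUc hd' hxd (by simpa using hx)

end IsCPWL

theorem cpwl_independent_of_null_components_general {s t : ℕ}
    (ξ : WithLp 2 (Euc s × Euc t) → EReal) (hcpwl : IsCPWL ξ)
    (yb : WithLp 2 (Euc s × Euc t)) (α : ℝ)
    (hsub : ∀ y ∈ Metric.ball yb α, ∀ v ∈ subdiff ξ y,
      ((WithLp.equiv 2 (Euc s × Euc t)) v).2 = 0) :
    ∀ y ∈ Metric.ball yb α,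
      pl2 ((WithLp.equiv 2 (Euc s × Euc t)) y).1 ((WithLp.equiv 2 (Euc s × Euc t)) yb).2 ∈
        Metric.ball yb α →
      ξ y = ξ (pl2 ((WithLp.equiv 2 (Euc s × Euc t)) y).1
        ((WithLp.equiv 2 (Euc s × Euc t)) yb).2) := by
  intro y hy hy'
  set y' := pl2 ((WithLp.equiv 2 (Euc s × Euc t)) y).1 ((WithLp.equiv 2 (Euc s × Euc t)) yb).2
  have hd : ∀ z ∈ Metric.ball yb α, ∀ v ∈ subdiff ξ z, ⟪v, y' - y⟫ = 0 := fun z hz v hv => by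
    have hv₂ : v.snd = 0 := hsub z hz v hv
    simp [y', pl2, hv₂]
  simpa using (hcpwl.apply_add_eq isOpen_ball (convex_ball yb α) hd hy (by simpa using hy')).symm

/-- Key step of reducibility: if a proper l.s.c. CPWL function `ξ` on
`ℝ^m = ℝ^s × ℝ^{m-s}` has all its subgradients on the open ball `B(yb,α)` with last `m - s`
components zero, then within this ball `ξ` does not depend on the last `m - s` coordinates:
`ξ(y₁,y₂) = ξ(y₁, yb₂)` whenever both points lie in the ball. -/
theorem cpwl_independent_of_null_components {s t : ℕ} (hs : 1 ≤ s) (ht : 1 ≤ t)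
    (ξ : WithLp 2 (Euc s × Euc t) → EReal) (hcpwl : IsCPWL ξ) (hlsc : LowerSemicontinuous ξ)
    (yb : WithLp 2 (Euc s × Euc t)) (α : ℝ) (hα : 0 < α)
    (hsub : ∀ y ∈ Metric.ball yb α, ∀ v ∈ subdiff ξ y,
      ((WithLp.equiv 2 (Euc s × Euc t)) v).2 = 0) :
    ∀ y ∈ Metric.ball yb α,
      pl2 ((WithLp.equiv 2 (Euc s × Euc t)) y).1 ((WithLp.equiv 2 (Euc s × Euc t)) yb).2 ∈
        Metric.ball yb α →
      ξ y = ξ (pl2 ((WithLp.equiv 2 (Euc s × Euc t)) y).1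
        ((WithLp.equiv 2 (Euc s × Euc t)) yb).2) :=
  cpwl_independent_of_null_components_general ξ hcpwl yb α hsub
end
end

section
/- Let θ be a proper convex piecewise linear function on ℝ^m, let Φ : ℝ^n × ℝ^d → ℝ^m be C²-smooth around (x̄,w̄) with z̄ := Φ(x̄,w̄) ∈ dom θ, and assume the second-order qualification condition S(z̄) ∩ ker ∇_xΦ(x̄,w̄)* = {0}. Then for every q̄ ∈ ℝ^n for which the set M(x̄,w̄,q̄) := {v ∈ ∂θ(z̄) : ∇_xΦ(x̄,w̄)*v = q̄} is nonempty, M(x̄,w̄,q̄) is a singleton. -/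
noncomputable section
open Set Filter Topology Metric
open scoped RealInnerProductSpace Pointwise NNReal Classical

variable {F G : Type*} [NormedAddCommGroup F] [InnerProductSpace ℝ F]
  [NormedAddCommGroup G] [InnerProductSpace ℝ G]

theorem subsingleton_sep_of_disjoint_direction_ker {k V W : Type*} [Ring k] [AddCommGroup V]
    [Module k V] [AddCommGroup W] [Module k W] {s : Set V} {f : V →ₗ[k] W}
    (h : Disjoint (affineSpan k s).direction (LinearMap.ker f)) (q : W) :
    {v ∈ s | f v = q}.Subsingleton := by
  rintro v ⟨hv, rfl⟩ v' ⟨hv', hfv'⟩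
  have hdir : v - v' ∈ (affineSpan k s).direction :=
    AffineSubspace.vsub_mem_direction (subset_affineSpan k s hv) (subset_affineSpan k s hv')
  have hker : v - v' ∈ LinearMap.ker f := by
    rw [LinearMap.mem_ker, map_sub, hfv', sub_self]
  exact sub_eq_zero.mp (Submodule.disjoint_def.mp h _ hdir hker)

theorem multiplier_set_singleton_of_soqc_general {n dd m l p : ℕ}
    (a : Fin l → Euc m) (α : Fin l → ℝ) (d : Fin p → Euc m) (β : Fin p → ℝ)
    (Φ : Euc n × Euc dd → Euc m) (xb : Euc n) (wb : Euc dd)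
    (hsoqc : (Spar (cpwlFun a α d β) (Φ (xb, wb)) : Set (Euc m)) ∩
        {y | ContinuousLinearMap.adjoint (fderiv ℝ (fun x => Φ (x, wb)) xb) y = 0} = {0}) :
    ∀ qb : Euc n,
      {v ∈ subdiff (cpwlFun a α d β) (Φ (xb, wb)) |
          ContinuousLinearMap.adjoint (fderiv ℝ (fun x => Φ (x, wb)) xb) v = qb}.Nonempty →
      ∃ vb : Euc m,
        {v ∈ subdiff (cpwlFun a α d β) (Φ (xb, wb)) |
          ContinuousLinearMap.adjoint (fderiv ℝ (fun x => Φ (x, wb)) xb) v = qb} = {vb} := by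
  intro qb ⟨vb, hvb⟩
  have hdisj : Disjoint (Spar (cpwlFun a α d β) (Φ (xb, wb)))
      (LinearMap.ker (ContinuousLinearMap.adjoint (fderiv ℝ (fun x => Φ (x, wb)) xb) :
        Euc m →ₗ[ℝ] Euc n)) :=
    Submodule.disjoint_def.mpr fun y hS hker => hsoqc.subset ⟨hS, hker⟩
  exact ⟨vb, (subsingleton_sep_of_disjoint_direction_ker hdisj qb).eq_singleton_of_mem hvb⟩

/-- Under the second-order qualification condition
`S(zb) ∩ ker ∇ₓΦ(xb,wb)* = {0}`, the multiplier set
`M(xb,wb,qb) = {v ∈ ∂θ(zb) : ∇ₓΦ(xb,wb)* v = qb}` is a singleton whenever it is nonempty. -/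
theorem multiplier_set_singleton_of_soqc {n dd m l p : ℕ} (hl : 0 < l)
    (a : Fin l → Euc m) (α : Fin l → ℝ) (d : Fin p → Euc m) (β : Fin p → ℝ)
    (hdom : (cpwlDom d β).Nonempty)
    (Φ : Euc n × Euc dd → Euc m) (xb : Euc n) (wb : Euc dd)
    (hΦ : ContDiffAt ℝ 2 Φ (xb, wb)) (hzb : Φ (xb, wb) ∈ cpwlDom d β)
    (hsoqc : (Spar (cpwlFun a α d β) (Φ (xb, wb)) : Set (Euc m)) ∩
        {y | ContinuousLinearMap.adjoint (fderiv ℝ (fun x => Φ (x, wb)) xb) y = 0} = {0}) :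
    ∀ qb : Euc n,
      {v ∈ subdiff (cpwlFun a α d β) (Φ (xb, wb)) |
          ContinuousLinearMap.adjoint (fderiv ℝ (fun x => Φ (x, wb)) xb) v = qb}.Nonempty →
      ∃ vb : Euc m,
        {v ∈ subdiff (cpwlFun a α d β) (Φ (xb, wb)) |
          ContinuousLinearMap.adjoint (fderiv ℝ (fun x => Φ (x, wb)) xb) v = qb} = {vb} :=
  multiplier_set_singleton_of_soqc_general a α d β Φ xb wb hsoqc
end
end

section
/- Let θ be a proper convex piecewise linear function on ℝ^m, let Φ : ℝ^n × ℝ^d → ℝ^m and φ₀ : ℝ^n × ℝ^d → ℝ be C²-smooth around (x̄,w̄) with z̄ := Φ(x̄,w̄) ∈ dom θ. Suppose there exist a proper convex piecewise linear function ϑ : ℝ^s → ℝ ∪ {+∞}, an s×m matrix B, and a neighborhood O of z̄ such that θ(z) = ϑ(Bz) for all z ∈ O. Then x̄ is a fully stable locally optimal solution of the problem P(w̄,v̄): minimize φ₀(x,w̄) + θ(Φ(x,w̄)) − ⟨v̄,x⟩, if and only if x̄ is a fully stable locally optimal solution of the reduced problem P_r(w̄,v̄): minimize φ₀(x,w̄)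 + ϑ(BΦ(x,w̄)) − ⟨v̄,x⟩. -/
noncomputable section
open Set Filter Topology Metric
open scoped RealInnerProductSpace Pointwise NNReal Classical

variable {F G : Type*} [NormedAddCommGroup F] [InnerProductSpace ℝ F]
  [NormedAddCommGroup G] [InnerProductSpace ℝ G]

/-!
Full stability only depends on the objective near `(xb, wb)`. Given fully stable data
`(γ, W, V, σ, μ)` for one objective, shrink `γ` until the closed ball fits inside the region
where the two objectives agree, and shrink `W × V` so that the continuous argmin map `σ` stays
in the smaller ball. A minimizer over the large ball that lies in the small ball is still the
unique minimizer there, with the same optimal value. So `σ` and `μ` also serve the other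
objective. Near `zb` we have `θ = ϑ ∘ B`, and `Φ` is continuous, so the two composite
objectives agree near `(xb, wb)`.
-/

section

variable {n d : ℕ} {φ ψ : Euc n → Euc d → EReal} {xb x : Euc n} {γ γ' : ℝ} {w : Euc d}
  {v : Euc n}

lemma argminLoc_congr (h : ∀ y, ‖y - xb‖ ≤ γ → φ y w = ψ y w) :
    argminLoc φ xb γ w v = argminLoc ψ xb γ w v := by
  ext y
  refine and_congr_right fun hy => ?_
  rw [h y hy]
  exact and_congr_right fun _ => forall₂_congr fun z hz => by rw [h z hz]

lemma infLoc_congr (h : ∀ y, ‖y - xb‖ ≤ γ → φ y w = ψ y w) :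
    infLoc φ xb γ w v = infLoc ψ xb γ w v :=
  iInf_congr fun y => iInf_congr fun hy => by rw [h y hy]

lemma infLoc_eq_of_mem_argminLoc (hx : x ∈ argminLoc φ xb γ w v) :
    infLoc φ xb γ w v = φ x w - ((⟪v, x⟫ : ℝ) : EReal) :=
  le_antisymm (iInf₂_le x hx.1) (le_iInf₂ hx.2.2)

lemma mem_argminLoc_of_le (hγ : γ' ≤ γ) (hx : x ∈ argminLoc φ xb γ w v)
    (hx' : ‖x - xb‖ ≤ γ') : x ∈ argminLoc φ xb γ' w v :=
  ⟨hx', hx.2.1, fun y hy => hx.2.2 y (hy.trans hγ)⟩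

lemma argminLoc_eq_singleton_of_le (hγ : γ' ≤ γ) (hσ : argminLoc φ xb γ w v = {x})
    (hx' : ‖x - xb‖ ≤ γ') : argminLoc φ xb γ' w v = {x} := by
  have hx : x ∈ argminLoc φ xb γ w v := hσ ▸ rfl
  refine Set.eq_singleton_iff_unique_mem.2 ⟨mem_argminLoc_of_le hγ hx hx', fun y hy => ?_⟩
  have hy_large : y ∈ argminLoc φ xb γ w v :=
    ⟨hy.1.trans hγ, hy.2.1, fun z hz => (hy.2.2 x hx').trans (hx.2.2 z hz)⟩
  rwa [hσ] at hy_large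

lemma infLoc_eq_of_le (hγ : γ' ≤ γ) (hx : x ∈ argminLoc φ xb γ w v) (hx' : ‖x - xb‖ ≤ γ') :
    infLoc φ xb γ' w v = infLoc φ xb γ w v := by
  rw [infLoc_eq_of_mem_argminLoc hx, infLoc_eq_of_mem_argminLoc (mem_argminLoc_of_le hγ hx hx')]

variable {wb : Euc d} {vb : Euc n}

theorem FullyStableSol.congr (h : FullyStableSol φ xb wb vb)
    (hφψ : ∀ᶠ p in 𝓝 (xb, wb), φ p.1 p.2 = ψ p.1 p.2) : FullyStableSol ψ xb wb vb := by
  obtain ⟨U, hU, W₀, hW₀, hUW₀⟩ := mem_nhds_prod_iff.1 hφψ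
  obtain ⟨ε, hε, hεU⟩ := Metric.nhds_basis_closedBall.mem_iff.1 hU
  have hagree : ∀ y, ‖y - xb‖ ≤ ε → ∀ w ∈ W₀, φ y w = ψ y w := fun y hy w hw =>
    hUW₀ (Set.mk_mem_prod (hεU (by rwa [mem_closedBall, dist_eq_norm])) hw)
  obtain ⟨γ, hγ, W, hW, V, hV, ⟨σ, ⟨K, hσK⟩, hσ, hσb⟩, ⟨μ, ⟨L, hμL⟩, hμ⟩⟩ := h
  set γ' := min γ ε
  have hσ_near : σ ⁻¹' closedBall xb γ' ∈ 𝓝 (wb, vb) :=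
    (hσK.continuousOn.continuousAt (prod_mem_nhds hW hV)).preimage_mem_nhds
      (hσb ▸ closedBall_mem_nhds xb (lt_min hγ hε))
  obtain ⟨W', hW', V', hV', hWV'⟩ := mem_nhds_prod_iff.1 hσ_near
  have hsub : (W ∩ W₀ ∩ W') ×ˢ (V ∩ V') ⊆ W ×ˢ V :=
    Set.prod_mono (fun _ hw => hw.1.1) fun _ hv => hv.1
  have hlocal : ∀ w ∈ W ∩ W₀ ∩ W', ∀ v ∈ V ∩ V',
      (∀ y, ‖y - xb‖ ≤ γ' → φ y w = ψ y w) ∧ ‖σ (w, v) - xb‖ ≤ γ' :=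
    fun w ⟨⟨_, hw₀⟩, hw'⟩ v ⟨_, hv'⟩ =>
      ⟨fun y hy => hagree y (hy.trans (min_le_right _ _)) w hw₀,
        by simpa [mem_closedBall, dist_eq_norm] using hWV' (Set.mk_mem_prod hw' hv')⟩
  refine ⟨γ', lt_min hγ hε, W ∩ W₀ ∩ W', inter_mem (inter_mem hW hW₀) hW', V ∩ V',
    inter_mem hV hV', ⟨σ, ⟨K, hσK.mono hsub⟩, fun w hw v hv => ?_, hσb⟩,
    ⟨μ, ⟨L, hμL.mono hsub⟩, fun w hw v hv => ?_⟩⟩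
  · rw [← argminLoc_congr (hlocal w hw v hv).1]
    exact argminLoc_eq_singleton_of_le (min_le_left _ _) (hσ w hw.1.1 v hv.1)
      (hlocal w hw v hv).2
  · rw [← infLoc_congr (hlocal w hw v hv).1, ← hμ w hw.1.1 v hv.1]
    exact infLoc_eq_of_le (min_le_left _ _) (hσ w hw.1.1 v hv.1 ▸ rfl) (hlocal w hw v hv).2

theorem FullyStableSol.congr_iff (hφψ : ∀ᶠ p in 𝓝 (xb, wb), φ p.1 p.2 = ψ p.1 p.2) :
    FullyStableSol φ xb wb vb ↔ FullyStableSol ψ xb wb vb :=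
  ⟨fun h => h.congr hφψ, fun h => h.congr (hφψ.mono fun _ => Eq.symm)⟩

end

theorem fullyStable_iff_fullyStable_reduced_general {n dd m s : ℕ}
    (θ : Euc m → EReal)
    (Φ : Euc n × Euc dd → Euc m) (φ₀ : Euc n × Euc dd → ℝ) (xb : Euc n) (wb : Euc dd)
    (hΦ : ContDiffAt ℝ 2 Φ (xb, wb))
    (ϑ : Euc s → EReal) (B : Euc m →ₗ[ℝ] Euc s)
    (O : Set (Euc m)) (hO : O ∈ 𝓝 (Φ (xb, wb))) (hred : ∀ z ∈ O, θ z = ϑ (B z))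
    (vb : Euc n) :
    FullyStableSol (fun x w => ((φ₀ (x, w) : ℝ) : EReal) + θ (Φ (x, w))) xb wb vb ↔
    FullyStableSol (fun x w => ((φ₀ (x, w) : ℝ) : EReal) + ϑ (B (Φ (x, w)))) xb wb vb :=
  FullyStableSol.congr_iff <| (hΦ.continuousAt.eventually_mem hO).mono fun p hp => by
    rw [hred _ hp]

/-- Full stability in the original composite problem `P(wb,vb)` and in the
reduced problem `P_r(wb,vb)` are equivalent whenever `θ = ϑ ∘ B` near `zb = Φ(xb,wb)`. -/
theorem fullyStable_iff_fullyStable_reduced {n dd m s : ℕ}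
    (θ : Euc m → EReal) (hθ : IsCPWL θ)
    (Φ : Euc n × Euc dd → Euc m) (φ₀ : Euc n × Euc dd → ℝ) (xb : Euc n) (wb : Euc dd)
    (hΦ : ContDiffAt ℝ 2 Φ (xb, wb)) (hφ₀ : ContDiffAt ℝ 2 φ₀ (xb, wb))
    (hzb : θ (Φ (xb, wb)) ≠ ⊤)
    (ϑ : Euc s → EReal) (hϑ : IsCPWL ϑ) (B : Euc m →ₗ[ℝ] Euc s)
    (O : Set (Euc m)) (hO : O ∈ 𝓝 (Φ (xb, wb))) (hred : ∀ z ∈ O, θ z = ϑ (B z))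
    (vb : Euc n) :
    FullyStableSol (fun x w => ((φ₀ (x, w) : ℝ) : EReal) + θ (Φ (x, w))) xb wb vb ↔
    FullyStableSol (fun x w => ((φ₀ (x, w) : ℝ) : EReal) + ϑ (B (Φ (x, w)))) xb wb vb :=
  fullyStable_iff_fullyStable_reduced_general θ Φ φ₀ xb wb hΦ ϑ B O hO hred vb
end
end

section
/- Let θ be a proper convex piecewise linear function on ℝ^m, let Φ : ℝ^n × ℝ^d → ℝ^m and φ₀ : ℝ^n × ℝ^d → ℝ be C²-smooth around (x̄,w̄) with z̄ := Φ(x̄,w̄) ∈ dom θ, and assume the nondegeneracy condition S(z̄) ∩ ker ∇_xΦ(x̄,w̄)* = {0}. Let v̄ ∈ ℝ^n satisfy v̄ ∈ ∇_xφ₀(x̄,w̄) + ∇_xΦ(x̄,w̄)*∂θ(z̄). Then the set of Lagrange multipliers {λ ∈ ∂θ(z̄) : v̄ = ∇_xφ₀(x̄,w̄) + ∇_xΦ(x̄,w̄)*λ} is a singleton. -/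
noncomputable section
open Set Filter Topology Metric
open scoped RealInnerProductSpace Pointwise NNReal Classical

variable {F G : Type*} [NormedAddCommGroup F] [InnerProductSpace ℝ F]
  [NormedAddCommGroup G] [InnerProductSpace ℝ G]

section

variable {k V W M : Type*} [Ring k] [AddCommGroup V] [Module k V] [AddCommGroup W]
  [FunLike M V W] [AddMonoidHomClass M V W]

theorem injOn_of_direction_inter_ker {s : Set V} (f : M)
    (h : ((affineSpan k s).direction : Set V) ∩ {y | f y = 0} = {0}) : Set.InjOn f s := by
  intro x hx y hy hxy
  have hdir : x - y ∈ (affineSpan k s).direction :=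
    AffineSubspace.vsub_mem_direction (subset_affineSpan k s hx) (subset_affineSpan k s hy)
  have hker : f (x - y) = 0 := by rw [map_sub, hxy, sub_self]
  exact sub_eq_zero.mp (h.subset ⟨hdir, hker⟩)

end

theorem lagrange_multiplier_unique_general {n dd m l p : ℕ}
    (a : Fin l → Euc m) (α : Fin l → ℝ) (d : Fin p → Euc m) (β : Fin p → ℝ)
    (Φ : Euc n × Euc dd → Euc m) (φ₀ : Euc n × Euc dd → ℝ) (xb : Euc n) (wb : Euc dd)
    (hnd : (Spar (cpwlFun a α d β) (Φ (xb, wb)) : Set (Euc m)) ∩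
        {y | ContinuousLinearMap.adjoint (fderiv ℝ (fun x => Φ (x, wb)) xb) y = 0} = {0})
    (vb : Euc n)
    (hvb : ∃ lam ∈ subdiff (cpwlFun a α d β) (Φ (xb, wb)),
      vb = gradient (fun x => φ₀ (x, wb)) xb +
        ContinuousLinearMap.adjoint (fderiv ℝ (fun x => Φ (x, wb)) xb) lam) :
    ∃ lamb : Euc m,
      {lam ∈ subdiff (cpwlFun a α d β) (Φ (xb, wb)) |
        vb = gradient (fun x => φ₀ (x, wb)) xb +
          ContinuousLinearMap.adjoint (fderiv ℝ (fun x => Φ (x, wb)) xb) lam} = {lamb} := by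
  refine Set.exists_eq_singleton_iff_nonempty_subsingleton.mpr ⟨hvb, ?_⟩
  rintro lam ⟨hlam, hv⟩ lam' ⟨hlam', hv'⟩
  exact injOn_of_direction_inter_ker _ hnd hlam hlam' (add_left_cancel (hv.symm.trans hv'))

/-- Under the nondegeneracy condition `S(zb) ∩ ker ∇ₓΦ(xb,wb)* = {0}`,
the set of Lagrange multipliers `{λ ∈ ∂θ(zb) : vb = ∇ₓφ₀(xb,wb) + ∇ₓΦ(xb,wb)* λ}`
is a singleton. -/
theorem lagrange_multiplier_unique {n dd m l p : ℕ} (hl : 0 < l)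
    (a : Fin l → Euc m) (α : Fin l → ℝ) (d : Fin p → Euc m) (β : Fin p → ℝ)
    (hdom : (cpwlDom d β).Nonempty)
    (Φ : Euc n × Euc dd → Euc m) (φ₀ : Euc n × Euc dd → ℝ) (xb : Euc n) (wb : Euc dd)
    (hΦ : ContDiffAt ℝ 2 Φ (xb, wb)) (hφ₀ : ContDiffAt ℝ 2 φ₀ (xb, wb))
    (hzb : Φ (xb, wb) ∈ cpwlDom d β)
    (hnd : (Spar (cpwlFun a α d β) (Φ (xb, wb)) : Set (Euc m)) ∩
        {y | ContinuousLinearMap.adjoint (fderiv ℝ (fun x => Φ (x, wb)) xb) y = 0} = {0})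
    (vb : Euc n)
    (hvb : ∃ lam ∈ subdiff (cpwlFun a α d β) (Φ (xb, wb)),
      vb = gradient (fun x => φ₀ (x, wb)) xb +
        ContinuousLinearMap.adjoint (fderiv ℝ (fun x => Φ (x, wb)) xb) lam) :
    ∃ lamb : Euc m,
      {lam ∈ subdiff (cpwlFun a α d β) (Φ (xb, wb)) |
        vb = gradient (fun x => φ₀ (x, wb)) xb +
          ContinuousLinearMap.adjoint (fderiv ℝ (fun x => Φ (x, wb)) xb) lam} = {lamb} :=
  lagrange_multiplier_unique_general a α d β Φ φ₀ xb wb hnd vb hvb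
end
end

section
/- Let θ be a proper convex piecewise linear function on ℝ^m and (z̄,v̄) ∈ gph ∂θ. Then 0 ∈ ∂²θ(z̄,v̄)(u) for every u ∈ dom ∂²θ(z̄,v̄); that is, whenever there exists some w with (w,−u) ∈ N((z̄,v̄); gph ∂θ), one also has (0,−u) ∈ N((z̄,v̄); gph ∂θ). -/
noncomputable section
open Set Filter Topology Metric
open scoped RealInnerProductSpace Pointwise NNReal Classical

variable {F G : Type*} [NormedAddCommGroup F] [InnerProductSpace ℝ F]
  [NormedAddCommGroup G] [InnerProductSpace ℝ G]

/-! A CPWL function is, near any point `z₀` of its domain, affine along every short ray from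
`z₀`: the affine pieces attaining the maximum and the constraints binding near `z₀` are among
those active at `z₀`. This forces `∂θ(z) ⊆ ∂θ(z₀)` for `z` near `z₀`, so near a point `(z, v)`
of `gph ∂θ` the graph lies in `ℝ^m × ∂θ(z)`, with `∂θ(z)` convex. Hence the first component
of a Fréchet normal to the graph can be replaced by `0`, and passing to the limit turns
`(w, -u) ∈ N` into `(0, -u) ∈ N`. -/

lemma abs_inner_div_norm_le (η y : F) : |⟪η, y⟫ / ‖y‖| ≤ ‖η‖ := by
  rw [abs_div, abs_norm]
  exact div_le_of_le_mul₀ (norm_nonneg _) (norm_nonneg _) (abs_real_inner_le_norm _ _)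

lemma inner_nonpos_of_mem_frechetNormal {Ω : Set F} {x e η : F}
    (hη : η ∈ frechetNormal Ω x) (hseg : ∀ t ∈ Ioc (0 : ℝ) 1, x + t • e ∈ Ω) :
    ⟪η, e⟫ ≤ 0 := by
  rcases eq_or_ne e 0 with rfl | he
  · simp
  have hquot : ∀ t : ℝ, 0 < t → ⟪η, x + t • e - x⟫ / ‖x + t • e - x‖ = ⟪η, e⟫ / ‖e‖ := by
    intro t ht
    rw [add_sub_cancel_left, inner_smul_right, norm_smul, Real.norm_of_nonneg ht.le,
      mul_div_mul_left _ _ ht.ne']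
  have hpath : Tendsto (fun t : ℝ => x + t • e) (𝓝[>] 0) (𝓝[Ω] x) := by
    refine tendsto_nhdsWithin_iff.2 ⟨?_, ?_⟩
    · have : Continuous (fun t : ℝ => x + t • e) := by fun_prop
      simpa using (this.tendsto 0).mono_left nhdsWithin_le_nhds
    · filter_upwards [Ioc_mem_nhdsGT (zero_lt_one' ℝ)] with t ht using hseg t ht
  have hle : ⟪η, e⟫ / ‖e‖ ≤ 0 := by
    refine le_trans (le_limsup_of_frequently_le ?_ ?_) hη
    · refine hpath.frequently (Eventually.frequently ?_)
      filter_upwards [self_mem_nhdsWithin] with t ht using (hquot t ht).ge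
    · exact isBoundedUnder_of ⟨‖η‖, fun y => (abs_le.1 (abs_inner_div_norm_le η _)).2⟩
  simpa using (div_le_iff₀ (norm_pos_iff.2 he)).1 hle

lemma mem_frechetNormal_of_eventually_inner_nonpos {Ω : Set F} {x η : F} (hx : x ∈ Ω)
    (h : ∀ᶠ y in 𝓝[Ω] x, ⟪η, y - x⟫ ≤ 0) : η ∈ frechetNormal Ω x := by
  have : (𝓝[Ω] x).NeBot := mem_closure_iff_nhdsWithin_neBot.1 (subset_closure hx)
  refine limsup_le_of_le ?_ (h.mono fun y hy => div_nonpos_of_nonpos_of_nonneg hy (norm_nonneg _))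
  exact IsBoundedUnder.isCoboundedUnder_le
    (isBoundedUnder_of ⟨-‖η‖, fun y => (abs_le.1 (abs_inner_div_norm_le η _)).1⟩)

def graphL2 (S : F → Set G) : Set (WithLp 2 (F × G)) := {q | q.snd ∈ S q.fst}

/-- Near `q` the graph of `S` lies in `F × S q.fst` with `S q.fst` convex, so a Fréchet normal
only sees its `G`-component, which is a normal to `S q.fst` at `q.snd`. -/
lemma pl2_zero_snd_mem_frechetNormal {S : F → Set G} {q : WithLp 2 (F × G)}
    (hq : q ∈ graphL2 S) (hconv : Convex ℝ (S q.fst)) (hloc : ∀ᶠ z in 𝓝 q.fst, S z ⊆ S q.fst)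
    {η : WithLp 2 (F × G)} (hη : η ∈ frechetNormal (graphL2 S) q) :
    pl2 0 η.snd ∈ frechetNormal (graphL2 S) q := by
  have hpolar : ∀ v ∈ S q.fst, ⟪η.snd, v - q.snd⟫ ≤ 0 := by
    intro v hv
    have := inner_nonpos_of_mem_frechetNormal (e := pl2 0 (v - q.snd)) hη fun t ht => by
      simpa [graphL2, pl2] using hconv.add_smul_sub_mem hq hv ⟨ht.1.le, ht.2⟩
    simpa [pl2] using this
  have hfst : Tendsto WithLp.fst (𝓝[graphL2 S] q) (𝓝 q.fst) :=
    ((WithLp.continuous_fst 2 F G).tendsto _).mono_left nhdsWithin_le_nhds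
  refine mem_frechetNormal_of_eventually_inner_nonpos hq ?_
  filter_upwards [self_mem_nhdsWithin, hfst.eventually hloc] with y hy hyloc
  simpa [pl2] using hpolar _ (hyloc hy)

lemma pl2_zero_mem_limitingNormal {S : F → Set G} (hconv : ∀ z, Convex ℝ (S z))
    (hloc : ∀ z, (S z).Nonempty → ∀ᶠ z' in 𝓝 z, S z' ⊆ S z) {x : WithLp 2 (F × G)} {w : F}
    {u : G} (h : pl2 w u ∈ limitingNormal (graphL2 S) x) :
    pl2 0 u ∈ limitingNormal (graphL2 S) x := by
  obtain ⟨xs, ηs, hxs, hxlim, hηlim, hηs⟩ := h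
  refine ⟨xs, fun k => pl2 0 (ηs k).snd, hxs, hxlim, ?_, fun k => ?_⟩
  · have : Continuous fun η : WithLp 2 (F × G) => pl2 (0 : F) η.snd :=
      (WithLp.prod_continuous_toLp 2 F G).comp
        (continuous_const.prodMk (WithLp.continuous_snd 2 F G))
    exact (this.tendsto _).comp hηlim
  · exact pl2_zero_snd_mem_frechetNormal (hxs k) (hconv _) (hloc _ ⟨_, hxs k⟩) (hηs k)

lemma convex_setOf_add_inner_le (a b : EReal) (w : F) :
    Convex ℝ {v : F | a + ((⟪v, w⟫ : ℝ) : EReal) ≤ b} := by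
  induction a using EReal.rec with
  | bot => simp [convex_univ]
  | top =>
    by_cases hb : b = ⊤
    · simp [hb, convex_univ]
    · simp [hb, convex_empty]
  | coe r =>
    induction b using EReal.rec with
    | bot => simp [← EReal.coe_add, convex_empty]
    | top => simp [convex_univ]
    | coe s =>
      have : {v : F | (r : EReal) + ((⟪v, w⟫ : ℝ) : EReal) ≤ s} =
          {v | innerSL ℝ w v ≤ s - r} := by
        ext v
        simp only [Set.mem_ofPred_eq, ← EReal.coe_add, EReal.coe_le_coe_iff, innerSL_apply_apply,
          real_inner_comm w, le_sub_iff_add_le']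
      rw [this]
      exact convex_halfSpace_le (innerSL ℝ w).toLinearMap.isLinear _

lemma convex_subdiff (θ : F → EReal) (z : F) : Convex ℝ (subdiff θ z) := by
  have : subdiff θ z = ⋂ z', {v | θ z + ((⟪v, z' - z⟫ : ℝ) : EReal) ≤ θ z'} := by
    ext; simp [subdiff]
  rw [this]
  exact convex_iInter fun z' => convex_setOf_add_inner_le _ _ _

/-- Testing a subgradient `v` at `z₀ + h` against `z₀ + 2h` gives `⟪v, h⟫ ≤ t - s ≤ s - r`,
which moves the subgradient inequality from `z₀ + h` to `z₀`. -/
lemma subdiff_add_subset_of_midpoint {θ : F → EReal} {z₀ h : F} {r s t : ℝ} (hr : θ z₀ = r)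
    (hs : θ (z₀ + h) = s) (ht : θ (z₀ + (2 : ℝ) • h) = t) (hmid : t + r ≤ 2 * s) :
    subdiff θ (z₀ + h) ⊆ subdiff θ z₀ := by
  intro v hv z'
  have hvh : s + ⟪v, h⟫ ≤ t := by
    have := hv (z₀ + (2 : ℝ) • h)
    rw [hs, ht, show z₀ + (2 : ℝ) • h - (z₀ + h) = h by module] at this
    exact_mod_cast this
  have hsplit : ⟪v, z' - z₀⟫ = ⟪v, z' - (z₀ + h)⟫ + ⟪v, h⟫ := by
    rw [← inner_add_right]; congr 1; abel
  calc θ z₀ + ((⟪v, z' - z₀⟫ : ℝ) : EReal) = ((r + ⟪v, z' - z₀⟫ : ℝ) : EReal) := by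
        rw [hr, EReal.coe_add]
    _ ≤ ((s + ⟪v, z' - (z₀ + h)⟫ : ℝ) : EReal) := by
        rw [EReal.coe_le_coe_iff]; linarith
    _ = θ (z₀ + h) + ((⟪v, z' - (z₀ + h)⟫ : ℝ) : EReal) := by rw [hs, EReal.coe_add]
    _ ≤ θ z' := hv z'

lemma eventually_exists_eq_ciSup_and_eq_ciSup {X ι : Type*} [TopologicalSpace X] [Finite ι]
    [Nonempty ι] {g : ι → X → ℝ} (hg : ∀ i, Continuous (g i)) (x : X) :
    ∀ᶠ y in 𝓝 x, ∃ i, g i x = ⨆ j, g j x ∧ g i y = ⨆ j, g j y := by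
  obtain ⟨i₀, hi₀⟩ := exists_eq_ciSup_of_finite (f := fun j => g j x)
  have hinactive : ∀ᶠ y in 𝓝 x, ∀ j, g j x < g i₀ x → g j y < g i₀ y := by
    refine eventually_all.2 fun j => ?_
    by_cases hj : g j x < g i₀ x
    · exact ((hg j).continuousAt.eventually_lt (hg i₀).continuousAt hj).mono fun _ h _ => h
    · exact Eventually.of_forall fun _ h => absurd h hj
  filter_upwards [hinactive] with y hy
  obtain ⟨i, hi⟩ := exists_eq_ciSup_of_finite (f := fun j => g j y)
  refine ⟨i, le_antisymm (le_ciSup (f := fun j => g j x) (Finite.bddAbove_range _) i) ?_, hi⟩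
  rw [← hi₀]
  by_contra hlt
  exact (hy i (not_le.1 hlt)).not_ge
    (hi ▸ le_ciSup (f := fun j => g j y) (Finite.bddAbove_range _) i₀)

lemma eventually_iSup_inner_sub_midpoint_le {ι : Type*} [Finite ι] [Nonempty ι] (a : ι → F)
    (α : ι → ℝ) (z₀ : F) :
    ∀ᶠ h in 𝓝 (0 : F), (⨆ i, (⟪a i, z₀ + (2 : ℝ) • h⟫ - α i)) + ⨆ i, (⟪a i, z₀⟫ - α i) ≤
      2 * ⨆ i, (⟪a i, z₀ + h⟫ - α i) := by
  have hdouble : Tendsto (fun h : F => z₀ + (2 : ℝ) • h) (𝓝 0) (𝓝 z₀) := by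
    have : Continuous (fun h : F => z₀ + (2 : ℝ) • h) := by fun_prop
    simpa using this.tendsto 0
  filter_upwards [hdouble.eventually
    (eventually_exists_eq_ciSup_and_eq_ciSup (g := fun i z => ⟪a i, z⟫ - α i) (by fun_prop) z₀)]
    with h ⟨i, hi₀, hi₂⟩
  rw [← hi₀, ← hi₂]
  calc ⟪a i, z₀ + (2 : ℝ) • h⟫ - α i + (⟪a i, z₀⟫ - α i) = 2 * (⟪a i, z₀ + h⟫ - α i) := by
        simp only [inner_add_right, inner_smul_right]; ring
    _ ≤ 2 * ⨆ j, (⟪a j, z₀ + h⟫ - α j) := by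
        gcongr; exact le_ciSup (Finite.bddAbove_range (fun j => ⟪a j, z₀ + h⟫ - α j)) i

section CPWL

variable {m l p : ℕ} {a : Fin l → Euc m} {α : Fin l → ℝ} {d : Fin p → Euc m} {β : Fin p → ℝ}

lemma cpwlFun_of_mem {z : Euc m} (hz : z ∈ cpwlDom d β) :
    cpwlFun a α d β z = ((⨆ i, (⟪a i, z⟫ - α i) : ℝ) : EReal) :=
  if_pos hz

lemma mem_cpwlDom_of_mem_subdiff {z₁ z v : Euc m} (hz₁ : z₁ ∈ cpwlDom d β)
    (hv : v ∈ subdiff (cpwlFun a α d β) z) : z ∈ cpwlDom d β := by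
  by_contra hz
  simpa [cpwlFun, hz, hz₁] using hv z₁

lemma eventually_add_two_smul_mem_cpwlDom {z₀ : Euc m} (hz₀ : z₀ ∈ cpwlDom d β) :
    ∀ᶠ h in 𝓝 (0 : Euc m), z₀ + h ∈ cpwlDom d β → z₀ + (2 : ℝ) • h ∈ cpwlDom d β := by
  have hconstraint : ∀ i, ∀ᶠ h in 𝓝 (0 : Euc m),
      ⟪d i, z₀ + h⟫ ≤ β i → ⟪d i, z₀ + (2 : ℝ) • h⟫ ≤ β i := by
    intro i
    rcases (hz₀ i).lt_or_eq with hlt | heq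
    · have : Tendsto (fun h : Euc m => ⟪d i, z₀ + (2 : ℝ) • h⟫) (𝓝 0) (𝓝 ⟪d i, z₀⟫) := by
        have : Continuous (fun h : Euc m => ⟪d i, z₀ + (2 : ℝ) • h⟫) := by fun_prop
        simpa using this.tendsto 0
      exact (this.eventually_lt_const hlt).mono fun _ h _ => h.le
    · refine Eventually.of_forall fun h hh => ?_
      simp only [inner_add_right, inner_smul_right] at hh ⊢
      linarith
  filter_upwards [eventually_all.2 hconstraint] with h hh hmem i using hh i (hmem i)

variable (a α) in
lemma eventually_subdiff_cpwlFun_subset (hl : 0 < l) {z₀ : Euc m} (hz₀ : z₀ ∈ cpwlDom d β) :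
    ∀ᶠ z in 𝓝 z₀, subdiff (cpwlFun a α d β) z ⊆ subdiff (cpwlFun a α d β) z₀ := by
  have : Nonempty (Fin l) := ⟨⟨0, hl⟩⟩
  have hshift : Tendsto (fun z => z - z₀) (𝓝 z₀) (𝓝 0) := tendsto_sub_nhds_zero_iff.2 tendsto_id
  filter_upwards [hshift.eventually (eventually_add_two_smul_mem_cpwlDom hz₀),
    hshift.eventually (eventually_iSup_inner_sub_midpoint_le a α z₀)] with z hdom₂ hmid v hv
  have hz : z₀ + (z - z₀) = z := add_sub_cancel z₀ z
  have hzdom : z ∈ cpwlDom d β := mem_cpwlDom_of_mem_subdiff hz₀ hv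
  rw [← hz] at hv hzdom
  exact subdiff_add_subset_of_midpoint (cpwlFun_of_mem hz₀) (cpwlFun_of_mem hzdom)
    (cpwlFun_of_mem (hdom₂ hzdom)) hmid hv

end CPWL

theorem zero_mem_sosd_of_nonempty_general {m l p : ℕ} (hl : 0 < l)
    (a : Fin l → Euc m) (α : Fin l → ℝ) (d : Fin p → Euc m) (β : Fin p → ℝ)
    (hdom : (cpwlDom d β).Nonempty) (zb : Euc m)
    (vb : Euc m) :
    ∀ u : Euc m, (sosd (cpwlFun a α d β) zb vb u).Nonempty →
      0 ∈ sosd (cpwlFun a α d β) zb vb u := by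
  rintro u ⟨w, hw⟩
  obtain ⟨z₁, hz₁⟩ := hdom
  exact pl2_zero_mem_limitingNormal (convex_subdiff _)
    (fun _ ⟨_, hv⟩ => eventually_subdiff_cpwlFun_subset a α hl
      (mem_cpwlDom_of_mem_subdiff hz₁ hv)) hw

/-- For a CPWL function `θ` and `(zb,vb) ∈ gph ∂θ`, one has
`0 ∈ ∂²θ(zb,vb)(u)` for every `u ∈ dom ∂²θ(zb,vb)`. -/
theorem zero_mem_sosd_of_nonempty {m l p : ℕ} (hl : 0 < l)
    (a : Fin l → Euc m) (α : Fin l → ℝ) (d : Fin p → Euc m) (β : Fin p → ℝ)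
    (hdom : (cpwlDom d β).Nonempty) (zb : Euc m) (hzb : zb ∈ cpwlDom d β)
    (vb : Euc m) (hvb : vb ∈ subdiff (cpwlFun a α d β) zb) :
    ∀ u : Euc m, (sosd (cpwlFun a α d β) zb vb u).Nonempty →
      0 ∈ sosd (cpwlFun a α d β) zb vb u :=
  zero_mem_sosd_of_nonempty_general hl a α d β hdom zb vb
end
end
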